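/- arXiv:2105.08542 — 11 statements merged into one kernel-verified Lean document; each statement's English description precedes it below -/
import Mathlib

section
/- Let a, b, c : (ρ₀, ∞) → ℝ be positive C¹ functions satisfying 2bca' = b² - a² + c² and 2acb' = a² - b² + c² on (ρ₀, ∞), and suppose T := b/a extends continuously to ρ₀ with T(ρ₀) = 1. Then T(ρ) = 1 for all ρ > ρ₀, i.e. a = b on (ρ₀, ∞). -/
/-!
The ODE system gives the Riccati equation `T' = (1 - T²) / c` for `T = b / a`. Along it,
`V = (T - 1)²` satisfies `V' = -2 (T - 1)² (1 + T) / c ≤ 0`, so `V` is a nonnegative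
non-increasing function with limit `0` at `ρ₀`, hence identically zero.
-/

open Set Filter Topology

theorem AntitoneOn.le_of_tendsto_nhdsGT {f : ℝ → ℝ} {ρ₀ L : ℝ} (hf : AntitoneOn f (Ioi ρ₀))
    (hlim : Tendsto f (𝓝[>] ρ₀) (𝓝 L)) {ρ : ℝ} (hρ : ρ ∈ Ioi ρ₀) : f ρ ≤ L := by
  refine ge_of_tendsto hlim ?_
  filter_upwards [Ioo_mem_nhdsGT hρ] with x hx
  exact hf (Ioo_subset_Ioi_self hx) hρ hx.2.le

theorem hasDerivAt_div_of_kahler_ode {a b c : ℝ → ℝ} {a' b' ρ : ℝ}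
    (ha : HasDerivAt a a' ρ) (hb : HasDerivAt b b' ρ)
    (ha0 : a ρ ≠ 0) (hb0 : b ρ ≠ 0) (hc0 : c ρ ≠ 0)
    (hode1 : 2 * b ρ * c ρ * a' = b ρ ^ 2 - a ρ ^ 2 + c ρ ^ 2)
    (hode2 : 2 * a ρ * c ρ * b' = a ρ ^ 2 - b ρ ^ 2 + c ρ ^ 2) :
    HasDerivAt (fun x => b x / a x) ((1 - (b ρ / a ρ) ^ 2) / c ρ) ρ := by
  refine (hb.div ha ha0).congr_deriv ?_
  have hwronskian : c ρ * (b' * a ρ - b ρ * a') = a ρ ^ 2 - b ρ ^ 2 := by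
    apply mul_left_cancel₀ (mul_ne_zero two_ne_zero (mul_ne_zero ha0 hb0))
    linear_combination a ρ * b ρ * hode2 - a ρ * b ρ * hode1
  field_simp
  linear_combination hwronskian

theorem eqOn_one_of_hasDerivAt_one_sub_sq_div {T c : ℝ → ℝ} {ρ₀ : ℝ}
    (hT : ∀ ρ ∈ Ioi ρ₀, HasDerivAt T ((1 - T ρ ^ 2) / c ρ) ρ)
    (hT_ge : ∀ ρ ∈ Ioi ρ₀, -1 ≤ T ρ) (hc : ∀ ρ ∈ Ioi ρ₀, 0 ≤ c ρ)
    (hlim : Tendsto T (𝓝[>] ρ₀) (𝓝 1)) :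
    EqOn T 1 (Ioi ρ₀) := by
  set V : ℝ → ℝ := fun ρ => (T ρ - 1) ^ 2
  have hV : ∀ ρ ∈ Ioi ρ₀, HasDerivAt V (-(2 * (T ρ - 1) ^ 2 * (1 + T ρ)) / c ρ) ρ := by
    intro ρ hρ
    refine (((hT ρ hρ).sub_const 1).pow 2).congr_deriv ?_
    push_cast
    ring
  have hV_anti : AntitoneOn V (Ioi ρ₀) := by
    refine antitoneOn_of_hasDerivWithinAt_nonpos (convex_Ioi ρ₀)
      (fun ρ hρ => (hV ρ hρ).continuousAt.continuousWithinAt)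
      (fun ρ hρ => (hV ρ (interior_subset hρ)).hasDerivWithinAt) fun ρ hρ => ?_
    have hρ : ρ ∈ Ioi ρ₀ := interior_subset hρ
    have : 0 ≤ 1 + T ρ := by linarith [hT_ge ρ hρ]
    exact div_nonpos_of_nonpos_of_nonneg (neg_nonpos.2 (by positivity)) (hc ρ hρ)
  have hV_lim : Tendsto V (𝓝[>] ρ₀) (𝓝 0) := by
    simpa using (hlim.sub_const 1).pow 2
  intro ρ hρ
  have hV0 : V ρ = 0 := (hV_anti.le_of_tendsto_nhdsGT hV_lim hρ).antisymm (sq_nonneg _)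
  simpa [V, sub_eq_zero] using hV0

theorem stmt_1_general (ρ₀ : ℝ) (a b c a' b' : ℝ → ℝ)
    (hapos : ∀ ρ ∈ Set.Ioi ρ₀, 0 < a ρ)
    (hbpos : ∀ ρ ∈ Set.Ioi ρ₀, 0 < b ρ)
    (hcpos : ∀ ρ ∈ Set.Ioi ρ₀, 0 < c ρ)
    (hda : ∀ ρ ∈ Set.Ioi ρ₀, HasDerivAt a (a' ρ) ρ)
    (hdb : ∀ ρ ∈ Set.Ioi ρ₀, HasDerivAt b (b' ρ) ρ)
    (hode1 : ∀ ρ ∈ Set.Ioi ρ₀, 2 * b ρ * c ρ * a' ρ = (b ρ) ^ 2 - (a ρ) ^ 2 + (c ρ) ^ 2)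
    (hode2 : ∀ ρ ∈ Set.Ioi ρ₀, 2 * a ρ * c ρ * b' ρ = (a ρ) ^ 2 - (b ρ) ^ 2 + (c ρ) ^ 2)
    (hlim : Filter.Tendsto (fun ρ => b ρ / a ρ) (nhdsWithin ρ₀ (Set.Ioi ρ₀)) (nhds 1)) :
    ∀ ρ ∈ Set.Ioi ρ₀, b ρ = a ρ := by
  have hT_one : EqOn (fun ρ => b ρ / a ρ) 1 (Ioi ρ₀) := by
    refine eqOn_one_of_hasDerivAt_one_sub_sq_div (c := c) (fun ρ hρ => ?_) (fun ρ hρ => ?_)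
      (fun ρ hρ => (hcpos ρ hρ).le) hlim
    · exact hasDerivAt_div_of_kahler_ode (hda ρ hρ) (hdb ρ hρ) (hapos ρ hρ).ne'
        (hbpos ρ hρ).ne' (hcpos ρ hρ).ne' (hode1 ρ hρ) (hode2 ρ hρ)
    · have := div_pos (hbpos ρ hρ) (hapos ρ hρ)
      linarith
  intro ρ hρ
  exact (div_eq_one_iff_eq (hapos ρ hρ).ne').1 (hT_one hρ)

/-- Symmetry enhancement (Lemma 3.2, second part): if `a, b, c > 0` are `C¹` on `(ρ₀, ∞)`
solving the Kähler ODE system `2bca' = b² - a² + c²`, `2acb' = a² - b² + c²`, and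
`T = b/a` extends continuously to `ρ₀` with value `1`, then `a = b` on `(ρ₀, ∞)`. -/
theorem stmt_1 (ρ₀ : ℝ) (a b c a' b' : ℝ → ℝ)
    (hapos : ∀ ρ ∈ Set.Ioi ρ₀, 0 < a ρ)
    (hbpos : ∀ ρ ∈ Set.Ioi ρ₀, 0 < b ρ)
    (hcpos : ∀ ρ ∈ Set.Ioi ρ₀, 0 < c ρ)
    (hc : ContinuousOn c (Set.Ioi ρ₀))
    (hda : ∀ ρ ∈ Set.Ioi ρ₀, HasDerivAt a (a' ρ) ρ)
    (hdb : ∀ ρ ∈ Set.Ioi ρ₀, HasDerivAt b (b' ρ) ρ)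
    (hda' : ContinuousOn a' (Set.Ioi ρ₀))
    (hdb' : ContinuousOn b' (Set.Ioi ρ₀))
    (hode1 : ∀ ρ ∈ Set.Ioi ρ₀, 2 * b ρ * c ρ * a' ρ = (b ρ) ^ 2 - (a ρ) ^ 2 + (c ρ) ^ 2)
    (hode2 : ∀ ρ ∈ Set.Ioi ρ₀, 2 * a ρ * c ρ * b' ρ = (a ρ) ^ 2 - (b ρ) ^ 2 + (c ρ) ^ 2)
    (hlim : Filter.Tendsto (fun ρ => b ρ / a ρ) (nhdsWithin ρ₀ (Set.Ioi ρ₀)) (nhds 1)) :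
    ∀ ρ ∈ Set.Ioi ρ₀, b ρ = a ρ :=
  stmt_1_general ρ₀ a b c a' b' hapos hbpos hcpos hda hdb hode1 hode2 hlim
end

section
/- Suppose a, b, c are C¹ functions satisfying 2bca' = b² - a² + c² and 2acb' = a² - b² + c² near a point p, with a·b·c = 0 at p (i.e. det h = a²b²c² vanishes at p). Then at p either all three of a, b, c vanish (nut), or c = 0 with a² = b² ≠ 0 (bolt I), or a = 0 with b² = c² ≠ 0 (bolt II), or the case obtained from bolt II by interchanging a and b (b = 0 with a² = c² ≠ 0). -/
/-- Lemma 3.3 (nuts and bolts): at a point `p` where the `C¹` solution `(a, b, c)` of the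
Kähler ODE system degenerates (`a b c = 0`), either all of `a, b, c` vanish (nut),
or `c = 0` with `a² = b² ≠ 0` (bolt I), or `a = 0` with `b² = c² ≠ 0` (bolt II),
or (interchanging `a` and `b`) `b = 0` with `a² = c² ≠ 0`.
In particular `a(p) = b(p) = 0` forces `c(p) = 0`, and `a(p) = c(p) = 0` forces `b(p) = 0`. -/
theorem stmt_3 (p : ℝ) (a b c a' b' : ℝ → ℝ)
    (hda : HasDerivAt a (a' p) p) (hdb : HasDerivAt b (b' p) p)
    (hode1 : 2 * b p * c p * a' p = (b p) ^ 2 - (a p) ^ 2 + (c p) ^ 2)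
    (hode2 : 2 * a p * c p * b' p = (a p) ^ 2 - (b p) ^ 2 + (c p) ^ 2)
    (hdeg : a p * b p * c p = 0) :
    ((a p = 0 ∧ b p = 0) → c p = 0) ∧
    ((a p = 0 ∧ c p = 0) → b p = 0) ∧
    ((a p = 0 ∧ b p = 0 ∧ c p = 0) ∨
     (c p = 0 ∧ (a p) ^ 2 = (b p) ^ 2 ∧ a p ≠ 0) ∨
     (a p = 0 ∧ (b p) ^ 2 = (c p) ^ 2 ∧ b p ≠ 0) ∨
     (b p = 0 ∧ (a p) ^ 2 = (c p) ^ 2 ∧ a p ≠ 0)) := by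
  have hab0 : a p = 0 ∧ b p = 0 → c p = 0 := by
    rintro ⟨ha, hb⟩
    rw [ha, hb] at hode1
    have : (c p) ^ 2 = 0 := by linarith [hode1]
    exact pow_eq_zero_iff (n := 2) (by norm_num) |>.mp this
  have hac0 : a p = 0 ∧ c p = 0 → b p = 0 := by
    rintro ⟨ha, hc⟩
    rw [ha, hc] at hode1
    have : (b p) ^ 2 = 0 := by linarith [hode1]
    exact pow_eq_zero_iff (n := 2) (by norm_num) |>.mp this
  refine ⟨hab0, hac0, ?_⟩
  by_cases ha : a p = 0
  · by_cases hb : b p = 0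
    · exact Or.inl ⟨ha, hb, hab0 ⟨ha, hb⟩⟩
    · rw [ha] at hode2
      exact Or.inr (Or.inr (Or.inl ⟨ha, by nlinarith, hb⟩))
  · by_cases hb : b p = 0
    · rw [hb] at hode1
      exact Or.inr (Or.inr (Or.inr ⟨hb, by nlinarith, ha⟩))
    · have hc : c p = 0 := by
        rcases mul_eq_zero.mp hdeg with h | h
        · rcases mul_eq_zero.mp h with h' | h' <;> [exact absurd h' ha; exact absurd h' hb]
        · exact h
      rw [hc] at hode1
      exact Or.inr (Or.inl ⟨hc, by nlinarith, ha⟩)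
end

section
/- Let V(r) = c₀ + r²/ℓ² + c₂/r² + c₄/r⁴ with constants c₀, c₂, c₄ and ℓ > 0. Then V satisfies the fifth-order ODE 3r⁴VV⁽⁵⁾ + 6r⁴V'V⁽⁴⁾ + 30r³VV⁽⁴⁾ + 44r³V'V⁽³⁾ + r²(47V − 32)V⁽³⁾ + 8r³(V'')² − 3r(13V + 32)V'' + 26r²V'V'' − 34r(V')² + 3V'(13V + 32) = 0 on (0, ∞) if and only if c₂² = 3(c₀ − 1)c₄. -/
/-!
The profile `V = c₀ + r²/ℓ² + c₂/r² + c₄/r⁴` is a Laurent polynomial, so away from `r = 0` all its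
derivatives are again Laurent polynomials with explicit falling-factorial coefficients.
Substituting them into the ODE, every term cancels except `512 (c₂² − 3(c₀ − 1)c₄) / r⁵`;
in particular the cosmological term `r²/ℓ²` drops out entirely.
-/

/-- The fifth-order supersymmetry ODE (4.14) as an expression in `V` and `r`. -/
noncomputable def ODE5 (V : ℝ → ℝ) (r : ℝ) : ℝ :=
  3 * r ^ 4 * V r * iteratedDeriv 5 V r + 6 * r ^ 4 * deriv V r * iteratedDeriv 4 V r
    + 30 * r ^ 3 * V r * iteratedDeriv 4 V r + 44 * r ^ 3 * deriv V r * iteratedDeriv 3 V r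
    + r ^ 2 * (47 * V r - 32) * iteratedDeriv 3 V r + 8 * r ^ 3 * (iteratedDeriv 2 V r) ^ 2
    - 3 * r * (13 * V r + 32) * iteratedDeriv 2 V r + 26 * r ^ 2 * deriv V r * iteratedDeriv 2 V r
    - 34 * r * (deriv V r) ^ 2 + 3 * deriv V r * (13 * V r + 32)

open Finset

theorem iteratedDeriv_sum_mul_zpow {𝕜 ι : Type*} [NontriviallyNormedField 𝕜] [CompleteSpace 𝕜]
    (t : Finset ι) (c : ι → 𝕜) (m : ι → ℤ) (k : ℕ) {x : 𝕜} (hx : x ≠ 0) :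
    iteratedDeriv k (fun y => ∑ i ∈ t, c i * y ^ m i) x =
      ∑ i ∈ t, c i * (∏ j ∈ range k, ((m i : 𝕜) - j)) * x ^ (m i - k) := by
  have hsmooth (i : ι) : ContDiffAt 𝕜 k (fun y => c i * y ^ m i) x :=
    (analyticAt_const.mul (analyticAt_id.zpow hx)).contDiffAt
  rw [iteratedDeriv_fun_sum fun i _ => hsmooth i]
  refine sum_congr rfl fun i _ => ?_
  rw [iteratedDeriv_const_mul_field, iteratedDeriv_eq_iterate, iter_deriv_zpow, mul_assoc]

theorem ODE5_laurent_eq {a s b c x : ℝ} (hx : x ≠ 0) :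
    ODE5 (fun r => a + s * r ^ 2 + b / r ^ 2 + c / r ^ 4) x =
      512 * (b ^ 2 - 3 * (a - 1) * c) / x ^ 5 := by
  have hV : (fun r : ℝ => a + s * r ^ 2 + b / r ^ 2 + c / r ^ 4) =
      fun r => ∑ i, ![a, s, b, c] i * r ^ ![(0 : ℤ), 2, -2, -4] i := by
    funext r
    simp [Fin.sum_univ_four, div_eq_mul_inv, zpow_neg]
  have hD := fun k => iteratedDeriv_sum_mul_zpow univ ![a, s, b, c] ![(0 : ℤ), 2, -2, -4] k hx
  rw [hV]
  simp only [ODE5, ← iteratedDeriv_one, hD]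
  simp only [Fin.sum_univ_four, Matrix.cons_val, prod_range_succ, prod_range_zero]
  norm_num [zpow_neg]
  field_simp
  ring

theorem stmt_4_general (c₀ c₂ c₄ ℓ : ℝ) :
    (∀ r ∈ Set.Ioi (0 : ℝ),
        ODE5 (fun r => c₀ + r ^ 2 / ℓ ^ 2 + c₂ / r ^ 2 + c₄ / r ^ 4) r = 0) ↔
      c₂ ^ 2 = 3 * (c₀ - 1) * c₄ := by
  have hV : (fun r : ℝ => c₀ + r ^ 2 / ℓ ^ 2 + c₂ / r ^ 2 + c₄ / r ^ 4) =
      fun r => c₀ + (ℓ ^ 2)⁻¹ * r ^ 2 + c₂ / r ^ 2 + c₄ / r ^ 4 := by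
    funext r
    ring
  rw [hV]
  constructor
  · intro hODE
    have hODE_one := hODE 1 (Set.mem_Ioi.mpr one_pos)
    rw [ODE5_laurent_eq one_ne_zero] at hODE_one
    linarith
  · intro hc r hr
    rw [ODE5_laurent_eq hr.ne', hc, sub_self, mul_zero, zero_div]

/-- `V = c₀ + r²/ℓ² + c₂/r² + c₄/r⁴` solves the fifth-order supersymmetry ODE on `(0, ∞)`
if and only if `c₂² = 3(c₀ − 1)c₄`. -/
theorem stmt_4 (c₀ c₂ c₄ ℓ : ℝ) (hℓ : 0 < ℓ) :
    (∀ r ∈ Set.Ioi (0 : ℝ),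
        ODE5 (fun r => c₀ + r ^ 2 / ℓ ^ 2 + c₂ / r ^ 2 + c₄ / r ^ 4) r = 0) ↔
      c₂ ^ 2 = 3 * (c₀ - 1) * c₄ :=
  stmt_4_general c₀ c₂ c₄ ℓ
end

section
/- For every constant α and ℓ > 0, the function V(r) = 4α² + r²/ℓ² satisfies the fifth-order ODE 3r⁴VV⁽⁵⁾ + 6r⁴V'V⁽⁴⁾ + 30r³VV⁽⁴⁾ + 44r³V'V⁽³⁾ + r²(47V − 32)V⁽³⁾ + 8r³(V'')² − 3r(13V + 32)V'' + 26r²V'V'' − 34r(V')² + 3V'(13V + 32) = 0 on (0, ∞). -/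
lemma GR_deriv1 (α ℓ : ℝ) :
    deriv (fun r : ℝ => 4 * α ^ 2 + r ^ 2 / ℓ ^ 2) = fun r => 2 * r / ℓ ^ 2 := by
  funext r
  have h : (fun r : ℝ => 4 * α ^ 2 + r ^ 2 / ℓ ^ 2)
      = fun r : ℝ => 4 * α ^ 2 + r ^ 2 * (ℓ ^ 2)⁻¹ := by
    funext r; ring
  rw [h]
  rw [deriv_const_add]
  rw [deriv_mul_const (by fun_prop)]
  simp [deriv_pow]
  ring

lemma GR_deriv2 (α ℓ : ℝ) :
    deriv (deriv (fun r : ℝ => 4 * α ^ 2 + r ^ 2 / ℓ ^ 2)) = fun _ => 2 / ℓ ^ 2 := by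
  rw [GR_deriv1]
  funext r
  have h : (fun r : ℝ => 2 * r / ℓ ^ 2) = fun r : ℝ => (2 / ℓ ^ 2) * r := by
    funext r; ring
  rw [h, deriv_const_mul_field, deriv_id'']
  ring

lemma GR_it2 (α ℓ : ℝ) :
    iteratedDeriv 2 (fun r : ℝ => 4 * α ^ 2 + r ^ 2 / ℓ ^ 2) = fun _ => 2 / ℓ ^ 2 := by
  rw [iteratedDeriv_succ, iteratedDeriv_one, GR_deriv2]

lemma GR_it3 (α ℓ : ℝ) :
    iteratedDeriv 3 (fun r : ℝ => 4 * α ^ 2 + r ^ 2 / ℓ ^ 2) = fun _ => 0 := by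
  rw [iteratedDeriv_succ, GR_it2]
  funext r; simp

lemma GR_it4 (α ℓ : ℝ) :
    iteratedDeriv 4 (fun r : ℝ => 4 * α ^ 2 + r ^ 2 / ℓ ^ 2) = fun _ => 0 := by
  rw [iteratedDeriv_succ, GR_it3]
  funext r; simp

lemma GR_it5 (α ℓ : ℝ) :
    iteratedDeriv 5 (fun r : ℝ => 4 * α ^ 2 + r ^ 2 / ℓ ^ 2) = fun _ => 0 := by
  rw [iteratedDeriv_succ, GR_it4]
  funext r; simp

/-- The Gutowski-Reall potential `V = 4α² + r²/ℓ²` solves the fifth-order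
supersymmetry ODE on `(0, ∞)`. -/
theorem stmt_5 (α ℓ : ℝ) (hℓ : 0 < ℓ) :
    ∀ r ∈ Set.Ioi (0 : ℝ),
      ODE5 (fun r => 4 * α ^ 2 + r ^ 2 / ℓ ^ 2) r = 0 := by
  intro r hr
  have hℓ' : (ℓ : ℝ) ^ 2 ≠ 0 := pow_ne_zero _ hℓ.ne'
  unfold ODE5
  rw [GR_deriv1, GR_it2, GR_it3, GR_it4, GR_it5]
  field_simp
  ring
end

section
/- Let V be a real-analytic function on a neighborhood of 0 with power series V(r) = Σ Vₙrⁿ/n!, satisfying the ODE 3r⁴VV⁽⁵⁾ + 6r⁴V'V⁽⁴⁾ + 30r³VV⁽⁴⁾ + 44r³V'V⁽³⁾ + r²(47V − 32)V⁽³⁾ + 8r³(V'')² − 3r(13V + 32)V'' + 26r²V'V'' − 34r(V')² + 3V'(13V + 32) = 0 near 0. Then V₁ = 0, and moreover V₃·(V₀ − 32/11) = 0 and V₄·(V₀ − 1) = 0. -/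
open scoped ContDiff

section IteratedDeriv

variable {𝕜 F : Type*} [NontriviallyNormedField 𝕜] [NormedAddCommGroup F] [NormedSpace 𝕜 F]

theorem iteratedDeriv_iteratedDeriv (m k : ℕ) (f : 𝕜 → F) :
    iteratedDeriv m (iteratedDeriv k f) = iteratedDeriv (m + k) f := by
  simp only [iteratedDeriv_eq_iterate, Function.iterate_add, Function.comp_def]

theorem ContDiffAt.iteratedDeriv {f : 𝕜 → F} {x : 𝕜} (h : ContDiffAt 𝕜 ∞ f x) (k : ℕ) :
    ContDiffAt 𝕜 ∞ (iteratedDeriv k f) x := by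
  induction k with
  | zero => simpa using h
  | succ k ih => rw [iteratedDeriv_succ]; exact ih.derivWithin le_rfl

end IteratedDeriv

theorem iteratedDeriv_ODE5_zero {V : ℝ → ℝ} (hV : ContDiffAt ℝ ∞ V 0) :
    iteratedDeriv 1 (ODE5 V) 0 = 5 * deriv V 0 ^ 2 ∧
    iteratedDeriv 2 (ODE5 V) 0 =
      5 * iteratedDeriv 3 V 0 * (11 * V 0 - 32) - 45 * deriv V 0 * iteratedDeriv 2 V 0 ∧
    iteratedDeriv 3 (ODE5 V) 0 =
      384 * iteratedDeriv 4 V 0 * (V 0 - 1) + 420 * deriv V 0 * iteratedDeriv 3 V 0 := by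
  have hV₀ (n : ℕ) : ContDiffAt ℝ n V 0 := hV.of_le (by exact_mod_cast le_top)
  have hD (k n : ℕ) : ContDiffAt ℝ n (iteratedDeriv k V) 0 :=
    (hV.iteratedDeriv k).of_le (by exact_mod_cast le_top)
  unfold ODE5
  -- Reassociating keeps `3 * r` from becoming a factor: it would eta-reduce to `HMul.hMul 3`,
  -- whose iterated derivatives no simp lemma computes.
  simp only [← iteratedDeriv_one, mul_assoc, sq (iteratedDeriv _ V _)]
  simp (discharger := fun_prop) only [iteratedDeriv_fun_add, iteratedDeriv_fun_sub,
    iteratedDeriv_fun_mul, iteratedDeriv_const, iteratedDeriv_fun_pow_zero,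
    iteratedDeriv_fun_id_zero, iteratedDeriv_iteratedDeriv]
  refine ⟨?_, ?_, ?_⟩ <;> simp [Finset.sum_range_succ] <;> ring

/-- Low-order coefficient analysis: a real-analytic solution `V` of the fifth-order
supersymmetry ODE near `0` has Taylor coefficients satisfying `V₁ = 0`,
`V₃(V₀ − 32/11) = 0` and `V₄(V₀ − 1) = 0`, where `Vₙ = V⁽ⁿ⁾(0)`. -/
theorem stmt_6 (V : ℝ → ℝ) (hV : AnalyticAt ℝ V 0)
    (hode : ∀ᶠ r in nhds (0 : ℝ), ODE5 V r = 0) :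
    deriv V 0 = 0 ∧
    iteratedDeriv 3 V 0 * (V 0 - 32 / 11) = 0 ∧
    iteratedDeriv 4 V 0 * (V 0 - 1) = 0 := by
  have hsmooth : ContDiffAt ℝ ∞ V 0 := hV.contDiffAt
  have hcoeff (n : ℕ) : iteratedDeriv n (ODE5 V) 0 = 0 := by
    simpa using Filter.EventuallyEq.iteratedDeriv_eq n (g := fun _ => 0) hode
  obtain ⟨hd₁, hd₂, hd₃⟩ := iteratedDeriv_ODE5_zero hsmooth
  have h₁ : deriv V 0 = 0 := by simpa [hd₁] using hcoeff 1
  have h₂ := hd₂ ▸ hcoeff 2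
  have h₃ := hd₃ ▸ hcoeff 3
  rw [h₁] at h₂ h₃
  exact ⟨h₁, by linear_combination h₂ / 55, by linear_combination h₃ / 384⟩
end

section
/- Let V₀ > 1, V₂ ∈ ℝ, n ≥ 4, and suppose V(r) = V₀ + V₂r²/2 + Vₙrⁿ/n! + O(rⁿ⁺¹) is an analytic solution of the fifth-order ODE 3r⁴VV⁽⁵⁾ + 6r⁴V'V⁽⁴⁾ + 30r³VV⁽⁴⁾ + 44r³V'V⁽³⁾ + r²(47V − 32)V⁽³⁾ + 8r³(V'')² − 3r(13V + 32)V'' + 26r²V'V'' − 34r(V')² + 3V'(13V + 32) = 0 near r = 0. Then Vₙ = 0. -/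
open Finset

section IteratedDeriv

variable {𝕜 : Type*} [NontriviallyNormedField 𝕜]

theorem iteratedDeriv_iteratedDeriv_s7 {F : Type*} [NormedAddCommGroup F] [NormedSpace 𝕜 F]
    (i j : ℕ) (f : 𝕜 → F) :
    iteratedDeriv j (iteratedDeriv i f) = iteratedDeriv (j + i) f := by
  simp only [iteratedDeriv_eq_iterate, Function.iterate_add_apply]

theorem iteratedDeriv_pow_mul_zero {h : 𝕜 → 𝕜} {m : ℕ} (k : ℕ) (hh : ContDiffAt 𝕜 m h 0) :
    iteratedDeriv m (fun r => r ^ k * h r) 0 = m.descFactorial k * iteratedDeriv (m - k) h 0 := by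
  rw [iteratedDeriv_fun_mul (by fun_prop) hh, sum_eq_single k]
  · rw [iteratedDeriv_fun_pow_zero, if_pos rfl, Nat.descFactorial_eq_factorial_mul_choose]
    push_cast
    ring
  · intro j _ hj
    rw [iteratedDeriv_fun_pow_zero, if_neg hj]
    simp
  · intro hk
    rw [Nat.choose_eq_zero_of_lt (by simpa [Nat.lt_succ_iff] using hk)]
    simp

theorem iteratedDeriv_pow_mul_mul_zero {f g : 𝕜 → 𝕜} {m : ℕ} (k : ℕ)
    (hf : ContDiffAt 𝕜 m f 0) (hg : ContDiffAt 𝕜 m g 0) :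
    iteratedDeriv m (fun r => r ^ k * (f r * g r)) 0 = m.descFactorial k *
      ∑ j ∈ range (m - k + 1), ((m - k).choose j : 𝕜) * iteratedDeriv j f 0 *
        iteratedDeriv (m - k - j) g 0 := by
  rw [iteratedDeriv_pow_mul_zero k (hf.mul hg), iteratedDeriv_fun_mul
    (hf.of_le (by exact_mod_cast m.sub_le k)) (hg.of_le (by exact_mod_cast m.sub_le k))]

end IteratedDeriv

theorem sum_choose_mul_eq_ite {R : Type*} [Semiring R] (a : ℕ → R) {n α β M : ℕ}
    (hprod : ∀ i l, i + l = n → 0 < i → 0 < l → a i * a l = 0) (hβ : 0 < β)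
    (h : α + β + M = n) :
    ∑ j ∈ range (M + 1), (M.choose j : R) * a (j + α) * a (M - j + β)
      = if α = 0 then a 0 * a n else 0 := by
  split_ifs with hα
  · subst hα
    rw [sum_eq_single 0]
    · simp [← h, add_comm]
    · intro j hj hj0
      rw [mem_range] at hj
      rw [mul_assoc, hprod _ _ (by omega) (by omega) (by omega), mul_zero]
    · simp
  · refine sum_eq_zero fun j hj => ?_
    rw [mem_range] at hj
    rw [mul_assoc, hprod _ _ (by omega) (by omega) (by omega), mul_zero]

theorem ODE5_eq_sum_pow_mul (V : ℝ → ℝ) : ODE5 V = fun r =>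
    3 * (r ^ 4 * (iteratedDeriv 0 V r * iteratedDeriv 5 V r))
    + 6 * (r ^ 4 * (iteratedDeriv 1 V r * iteratedDeriv 4 V r))
    + 30 * (r ^ 3 * (iteratedDeriv 0 V r * iteratedDeriv 4 V r))
    + 44 * (r ^ 3 * (iteratedDeriv 1 V r * iteratedDeriv 3 V r))
    + 47 * (r ^ 2 * (iteratedDeriv 0 V r * iteratedDeriv 3 V r))
    + 8 * (r ^ 3 * (iteratedDeriv 2 V r * iteratedDeriv 2 V r))
    + 26 * (r ^ 2 * (iteratedDeriv 1 V r * iteratedDeriv 2 V r))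
    + -39 * (r ^ 1 * (iteratedDeriv 0 V r * iteratedDeriv 2 V r))
    + -34 * (r ^ 1 * (iteratedDeriv 1 V r * iteratedDeriv 1 V r))
    + 39 * (r ^ 0 * (iteratedDeriv 0 V r * iteratedDeriv 1 V r))
    + -32 * (r ^ 2 * iteratedDeriv 3 V r)
    + -96 * (r ^ 1 * iteratedDeriv 2 V r)
    + 96 * (r ^ 0 * iteratedDeriv 1 V r) := by
  ext r
  simp only [ODE5, iteratedDeriv_zero, iteratedDeriv_one]
  ring

noncomputable def indicialCoeff (V₀ : ℝ) (n : ℕ) : ℝ :=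
  (3 * V₀ * (n ^ 2 - 16) + 32 * (V₀ - 1)) * (n ^ 2 - 4)

theorem indicialCoeff_pos {V₀ : ℝ} (hV₀ : 1 < V₀) {n : ℕ} (hn : 4 ≤ n) :
    0 < indicialCoeff V₀ n := by
  have hn' : (4 : ℝ) ≤ n := by exact_mod_cast hn
  have h16 : 0 ≤ (n : ℝ) ^ 2 - 16 := by nlinarith
  have h4 : 0 < (n : ℝ) ^ 2 - 4 := by nlinarith
  have h3 : 0 ≤ 3 * V₀ * ((n : ℝ) ^ 2 - 16) := mul_nonneg (by linarith) h16
  exact mul_pos (by linarith) h4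

attribute [local fun_prop] AnalyticAt.contDiffAt in
theorem iteratedDeriv_ODE5_zero_s7 {V : ℝ → ℝ} (hV : AnalyticAt ℝ V 0) {n : ℕ} (hn : 4 ≤ n)
    (hvanish : ∀ j, j ≠ 0 → j ≠ 2 → j < n → iteratedDeriv j V 0 = 0) :
    iteratedDeriv (n - 1) (ODE5 V) 0 = indicialCoeff (V 0) n * iteratedDeriv n V 0 := by
  have hD (j : ℕ) : AnalyticAt ℝ (iteratedDeriv j V) 0 := by
    rw [iteratedDeriv_eq_iterate]
    exact hV.iterated_deriv j
  rw [ODE5_eq_sum_pow_mul]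
  simp (disch := fun_prop) only [iteratedDeriv_fun_add, iteratedDeriv_const_mul_field,
    iteratedDeriv_pow_mul_mul_zero, iteratedDeriv_pow_mul_zero, iteratedDeriv_iteratedDeriv_s7]
  obtain rfl | hn5 := hn.eq_or_lt
  · simp only [sum_range_succ, sum_range_zero, Nat.descFactorial, Nat.choose, Nat.cast_one,
      Nat.reduceSub, add_zero, zero_add, iteratedDeriv_zero,
      hvanish 1 (by omega) (by omega) (by omega), hvanish 3 (by omega) (by omega) (by omega),
      indicialCoeff]
    ring
  · obtain ⟨q, rfl⟩ : ∃ q, n = q + 5 := ⟨n - 5, by omega⟩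
    have hprod : ∀ i l, i + l = q + 5 → 0 < i → 0 < l →
        iteratedDeriv i V 0 * iteratedDeriv l V 0 = 0 := by
      intro i l hil hi hl
      obtain rfl | hi2 := eq_or_ne i 2
      · rw [hvanish l (by omega) (by omega) (by omega), mul_zero]
      · rw [hvanish i (by omega) hi2 (by omega), zero_mul]
    simp (disch := omega) only [sum_choose_mul_eq_ite (fun j => iteratedDeriv j V 0) hprod]
    simp only [Nat.add_one_sub_one, Nat.descFactorial_succ, Nat.reduceSubDiff, tsub_zero,
      Nat.descFactorial_zero, mul_one, Nat.cast_mul, Nat.cast_add, Nat.cast_one, Nat.cast_ofNat,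
      ↓reduceIte, one_ne_zero, OfNat.ofNat_ne_zero, iteratedDeriv_zero, mul_zero, add_zero,
      indicialCoeff]
    ring

/-- Inductive step of the uniqueness proof: if an analytic solution of the fifth-order
supersymmetry ODE near `0` has `V(0) = V₀ > 1` and all Taylor coefficients of orders
`1, 3, 4, …, n − 1` vanish (`n ≥ 4`), then the `n`-th coefficient also vanishes. -/
theorem stmt_7 (V : ℝ → ℝ) (V₀ : ℝ) (n : ℕ) (hn : 4 ≤ n)
    (hV : AnalyticAt ℝ V 0)
    (hode : ∀ᶠ r in nhds (0 : ℝ), ODE5 V r = 0)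
    (hV₀ : V 0 = V₀) (hV₀gt : 1 < V₀)
    (h1 : deriv V 0 = 0) (h3 : iteratedDeriv 3 V 0 = 0)
    (hmid : ∀ k, 4 ≤ k → k < n → iteratedDeriv k V 0 = 0) :
    iteratedDeriv n V 0 = 0 := by
  have hvanish : ∀ j, j ≠ 0 → j ≠ 2 → j < n → iteratedDeriv j V 0 = 0 := by
    intro j hj0 hj2 hjn
    obtain rfl | rfl | hj4 : j = 1 ∨ j = 3 ∨ 4 ≤ j := by omega
    · rwa [iteratedDeriv_one]
    · exact h3
    · exact hmid j hj4 hjn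
  have hcoeff : indicialCoeff V₀ n * iteratedDeriv n V 0 = 0 := by
    rw [← hV₀, ← iteratedDeriv_ODE5_zero_s7 hV hn hvanish,
      Filter.EventuallyEq.iteratedDeriv_eq (n - 1) hode]
    simp
  exact (mul_eq_zero.1 hcoeff).resolve_left (indicialCoeff_pos hV₀gt hn).ne'
end

section
/- Let V : [0, ε) → ℝ be real-analytic with V(0) > 1, V'(0) = 0, V'''(0) = 0, and suppose V solves the fifth-order ODE 3r⁴VV⁽⁵⁾ + 6r⁴V'V⁽⁴⁾ + 30r³VV⁽⁴⁾ + 44r³V'V⁽³⁾ + r²(47V − 32)V⁽³⁾ + 8r³(V'')² − 3r(13V + 32)V'' + 26r²V'V'' − 34r(V')² + 3V'(13V + 32) = 0 on (0, ε). Then V(r) = V₀ + V₂r²/2 for constants V₀ = V(0) and V₂ = V''(0); i.e., V is a quadratic polynomial in r with no odd or quartic and higher terms. -/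
open Filter Topology Set Polynomial

theorem exists_analyticAt_pow_mul_iteratedDeriv_pow_mul {g : ℝ → ℝ} (hg : AnalyticAt ℝ g 0)
    (N k : ℕ) :
    ∃ W : ℝ → ℝ, AnalyticAt ℝ W 0 ∧ W 0 = (descPochhammer ℝ k).eval (N : ℝ) * g 0 ∧
      (fun x => x ^ k * iteratedDeriv k (fun y => y ^ N * g y) x) =ᶠ[𝓝 0]
        fun x => x ^ N * W x := by
  induction k with
  | zero => exact ⟨g, hg, by simp, by simp⟩
  | succ k ih =>
    obtain ⟨W, hW, hW0, hWeq⟩ := ih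
    -- differentiate `x ^ k * h⁽ᵏ⁾ x = x ^ N * W x` and multiply by `x`
    refine ⟨fun x => (N - k) * W x + x * deriv W x, by fun_prop, ?_, ?_⟩
    · simp only [descPochhammer_succ_eval, hW0, zero_mul, add_zero]
      ring
    have hh : AnalyticAt ℝ (fun y => y ^ N * g y) 0 := by fun_prop
    filter_upwards [hWeq.eventuallyEq_nhds, hW.eventually_analyticAt,
      hh.eventually_analyticAt] with x hx hWx hhx
    have hD : HasDerivAt (iteratedDeriv k fun y => y ^ N * g y)
        (iteratedDeriv (k + 1) (fun y => y ^ N * g y) x) x := by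
      rw [iteratedDeriv_succ, iteratedDeriv_eq_iterate]
      exact (hhx.iterated_deriv k).differentiableAt.hasDerivAt
    have hderiv := ((hasDerivAt_pow k x).mul hD).unique
      (((hasDerivAt_pow N x).mul hWx.differentiableAt.hasDerivAt).congr_of_eventuallyEq hx)
    have hpow (n : ℕ) : x * (n * x ^ (n - 1)) = n * x ^ n := by
      cases n <;>
        simp only [Nat.cast_zero, Nat.cast_succ, zero_mul, mul_zero, add_tsub_cancel_right,
          pow_succ]
      ring
    linear_combination x * hderiv + W x * hpow N
      - iteratedDeriv k (fun y => y ^ N * g y) x * hpow k - k * hx.eq_of_nhds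

/-- With `d k = r ^ k * V⁽ᵏ⁾ r`, `r * ODE5 V r = odeBilin d d + odeLin d`. -/
def odeBilin (d e : Fin 6 → ℝ) : ℝ :=
  3 * d 0 * e 5 + 6 * d 1 * e 4 + 30 * d 0 * e 4 + 44 * d 1 * e 3 + 47 * d 0 * e 3
    + 8 * d 2 * e 2 - 39 * d 0 * e 2 + 26 * d 1 * e 2 - 34 * d 1 * e 1 + 39 * d 1 * e 0

def odeLin (d : Fin 6 → ℝ) : ℝ := 96 * d 1 - 96 * d 2 - 32 * d 3

def odePoly (d : Fin 6 → ℝ) : ℝ := odeBilin d d + odeLin d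

def odeLinearization (d e : Fin 6 → ℝ) : ℝ := odeBilin d e + odeBilin e d + odeLin e

noncomputable def scaledDerivs (f : ℝ → ℝ) (x : ℝ) : Fin 6 → ℝ :=
  fun k => x ^ (k : ℕ) * iteratedDeriv k f x

theorem mul_ODE5_eq_odePoly (V : ℝ → ℝ) (x : ℝ) :
    x * ODE5 V x = odePoly (scaledDerivs V x) := by
  simp only [ODE5, odePoly, odeBilin, odeLin, scaledDerivs, Fin.coe_ofNat_eq_mod, Nat.reduceMod,
    iteratedDeriv_zero, iteratedDeriv_one]
  ring

theorem odePoly_add_smul (d e : Fin 6 → ℝ) (t : ℝ) :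
    odePoly (d + t • e) = odePoly d + t * (odeLinearization d e + t * odeBilin e e) := by
  simp only [odePoly, odeLinearization, odeBilin, odeLin, Pi.add_apply, Pi.smul_apply,
    smul_eq_mul]
  ring

theorem scaledDerivs_quadratic (a c x : ℝ) :
    scaledDerivs (fun y => a + c * y ^ 2) x
      = ![a + c * x ^ 2, 2 * c * x ^ 2, 2 * c * x ^ 2, 0, 0, 0] := by
  have h1 : deriv (fun y => a + c * y ^ 2) = fun y => 2 * c * y := by
    ext y
    exact (((hasDerivAt_pow 2 y).const_mul c).const_add a).deriv.trans (by ring)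
  have h2 : iteratedDeriv 2 (fun y => a + c * y ^ 2) = fun _ => 2 * c := by
    rw [iteratedDeriv_succ, iteratedDeriv_one, h1]
    ext y
    simp
  have h3 (n : ℕ) (y : ℝ) : iteratedDeriv (n + 3) (fun y => a + c * y ^ 2) y = 0 := by
    rw [iteratedDeriv_succ', iteratedDeriv_succ', iteratedDeriv_succ', h1]
    simp
  ext k
  fin_cases k <;>
    simp only [scaledDerivs, iteratedDeriv_zero, iteratedDeriv_one, h1, h2, h3 0 x, h3 1 x, h3 2 x,
      Fin.reduceFinMk, Matrix.cons_val] <;> ring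

theorem odePoly_quadratic (a c x : ℝ) :
    odePoly ![a + c * x ^ 2, 2 * c * x ^ 2, 2 * c * x ^ 2, 0, 0, 0] = 0 := by
  simp only [odePoly, odeBilin, odeLin, Matrix.cons_val]
  ring

/-- The linearisation at the constant solution `a` sends `r ^ N` to
`r ^ (N - 1) * indicialPoly a N`. -/
noncomputable def indicialPoly (a N : ℝ) : ℝ :=
  odeLinearization ![a, 0, 0, 0, 0, 0] fun k => (descPochhammer ℝ k).eval N

theorem indicialPoly_pos {a N : ℝ} (ha : 1 < a) (hN : 4 ≤ N) : 0 < indicialPoly a N := by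
  obtain ⟨m, hm, rfl⟩ : ∃ m, 0 ≤ m ∧ N = m + 4 := ⟨N - 4, by linarith, by ring⟩
  simp only [indicialPoly, odeLinearization, odeBilin, odeLin, Matrix.cons_val,
    Fin.coe_ofNat_eq_mod, Nat.reduceMod, descPochhammer_succ_eval, descPochhammer_zero, eval_one,
    Nat.cast_ofNat, Nat.cast_one, Nat.cast_zero]
  have hA : (0 : ℝ) < 3 * m ^ 5 + 60 * m ^ 4 + 452 * m ^ 3 + 1584 * m ^ 2 + 2560 * m + 1536 := by
    positivity
  have hB : (0 : ℝ) ≤ 3 * m ^ 5 + 60 * m ^ 4 + 420 * m ^ 3 + 1200 * m ^ 2 + 1152 * m := by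
    positivity
  nlinarith [mul_pos (sub_pos.2 ha) hA]

theorem eq_zero_of_ODE5_quadratic_add_pow_mul {V g : ℝ → ℝ} {a c : ℝ} {N : ℕ} (ha : 1 < a)
    (hN : 4 ≤ N) (hg : AnalyticAt ℝ g 0)
    (hV : V =ᶠ[𝓝 0] fun x => a + c * x ^ 2 + x ^ N * g x)
    (hode : ∀ᶠ x in 𝓝[>] 0, ODE5 V x = 0) : g 0 = 0 := by
  choose W hWa hW0 hWeq using exists_analyticAt_pow_mul_iteratedDeriv_pow_mul hg N
  have hsplit : ∀ᶠ x in 𝓝 0, scaledDerivs V x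
      = scaledDerivs (fun y => a + c * y ^ 2) x + x ^ N • fun k : Fin 6 => W k x := by
    have hh : AnalyticAt ℝ (fun y => y ^ N * g y) 0 := by fun_prop
    have hadd (k : Fin 6) : ∀ᶠ x in 𝓝 0, iteratedDeriv k V x
        = iteratedDeriv k (fun y => a + c * y ^ 2) x
          + iteratedDeriv k (fun y => y ^ N * g y) x := by
      filter_upwards [hV.iteratedDeriv k, hh.eventually_analyticAt] with x hx hhx
      rw [hx, iteratedDeriv_fun_add (by fun_prop) hhx.contDiffAt]
    filter_upwards [eventually_all.2 hadd, eventually_all.2 fun k : Fin 6 => hWeq k]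
      with x hx hWx
    ext k
    simp only [scaledDerivs, Pi.add_apply, Pi.smul_apply, smul_eq_mul, hx k, mul_add, hWx k]
  set G : ℝ → ℝ := fun x => odeLinearization (scaledDerivs (fun y => a + c * y ^ 2) x)
    (fun k => W k x) + x ^ N * odeBilin (fun k => W k x) (fun k => W k x) with hG
  have hGzero : ∀ᶠ x in 𝓝[>] 0, G x = 0 := by
    filter_upwards [hode, self_mem_nhdsWithin, nhdsWithin_le_nhds hsplit] with x hx hpos hsx
    have h := mul_ODE5_eq_odePoly V x
    rw [hx, hsx, odePoly_add_smul, scaledDerivs_quadratic, odePoly_quadratic] at h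
    simpa [hG, scaledDerivs_quadratic, pow_ne_zero N (mem_Ioi.1 hpos).ne'] using h.symm
  have hGcont : ContinuousAt G 0 := by
    have hWc (k : ℕ) := (hWa k).continuousAt
    simp only [hG, scaledDerivs_quadratic, odeLinearization, odeBilin, odeLin]
    fun_prop
  have hG0 : G 0 = 0 := tendsto_nhds_unique (hGcont.tendsto.mono_left nhdsWithin_le_nhds)
    (tendsto_const_nhds.congr' (EventuallyEq.symm hGzero))
  have hG0' : G 0 = g 0 * indicialPoly a N := by
    simp only [hG, indicialPoly, odeLinearization, odeBilin, odeLin, scaledDerivs_quadratic,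
      Matrix.cons_val, Fin.coe_ofNat_eq_mod, Nat.reduceMod, hW0, zero_pow (by omega : N ≠ 0)]
    ring
  rw [hG0'] at hG0
  exact (mul_eq_zero.1 hG0).resolve_right (indicialPoly_pos ha (by exact_mod_cast hN)).ne'

theorem eventuallyEq_quadratic_of_ODE5 {V : ℝ → ℝ} (hV : AnalyticAt ℝ V 0) (hV₀ : 1 < V 0)
    (h1 : deriv V 0 = 0) (h3 : iteratedDeriv 3 V 0 = 0)
    (hode : ∀ᶠ x in 𝓝[>] 0, ODE5 V x = 0) :
    V =ᶠ[𝓝 0] fun r => V 0 + iteratedDeriv 2 V 0 * r ^ 2 / 2 := by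
  obtain ⟨F, hF, hVF⟩ := hV.exists_eventuallyEq_sum_add_pow_mul 4
  have hV4 : V =ᶠ[𝓝 0] fun x => V 0 + iteratedDeriv 2 V 0 / 2 * x ^ 2 + x ^ 4 * F x := by
    filter_upwards [hVF] with x hx
    simp only [hx, Finset.sum_range_succ, Finset.sum_range_zero, iteratedDeriv_zero,
      iteratedDeriv_one, h1, h3, smul_eq_mul, Nat.factorial]
    ring
  by_cases htop : analyticOrderAt F 0 = ⊤
  · filter_upwards [hV4, analyticOrderAt_eq_top.1 htop] with x hx hF0
    rw [hx, hF0]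
    ring
  obtain ⟨g, hg, hg0, hFg⟩ := hF.analyticOrderAt_ne_top.1 htop
  refine absurd (eq_zero_of_ODE5_quadratic_add_pow_mul (c := iteratedDeriv 2 V 0 / 2)
    (N := analyticOrderNatAt F 0 + 4) hV₀ (Nat.le_add_left 4 _) hg ?_ hode) hg0
  filter_upwards [hV4, hFg] with x hx hx'
  rw [hx, hx']
  simp only [sub_zero, smul_eq_mul]
  ring

/-- Core of the black hole uniqueness theorem: a real-analytic solution `V` on `[0, ε)`
of the fifth-order supersymmetry ODE with `V(0) > 1`, `V'(0) = 0` and `V'''(0) = 0`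
must be the quadratic `V(r) = V(0) + V''(0) r²/2`. -/
theorem stmt_9 (V : ℝ → ℝ) (ε : ℝ) (hε : 0 < ε)
    (hV : AnalyticOnNhd ℝ V (Set.Ico 0 ε))
    (hV₀ : 1 < V 0) (h1 : deriv V 0 = 0) (h3 : iteratedDeriv 3 V 0 = 0)
    (hode : ∀ r ∈ Set.Ioo (0 : ℝ) ε, ODE5 V r = 0) :
    ∀ r ∈ Set.Ico (0 : ℝ) ε, V r = V 0 + iteratedDeriv 2 V 0 * r ^ 2 / 2 := by
  have h0 : (0 : ℝ) ∈ Ico 0 ε := ⟨le_rfl, hε⟩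
  refine hV.eqOn_of_preconnected_of_eventuallyEq (fun _ _ => by fun_prop)
    (convex_Ico 0 ε).isPreconnected h0 ?_
  exact eventuallyEq_quadratic_of_ODE5 (hV 0 h0) hV₀ h1 h3
    (eventually_of_mem (Ioo_mem_nhdsGT hε) hode)
end

section
/- Let K₀ be a constant real antisymmetric 3×3 matrix and let K : [τ₀, ∞) → Mat₃(ℝ) be continuous antisymmetric-matrix valued with ‖K(τ) − K₀‖ ≤ Ce^{−τ} for all τ ≥ τ₀. If A solves dA/dτ = −A·K(τ) with A(τ₀) ∈ SO(3), then A(τ) ∈ SO(3) for all τ, and there exists a constant orthogonal matrix A₀ such that ‖A(τ) − A₀e^{−τK₀}‖ ≤ C'e^{−τ} for all τ ≥ τ₀. -/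
/-!
Since `K` is skew, `(A Aᵀ)' = -A K Aᵀ - A Kᵀ Aᵀ = 0`, so `A` stays orthogonal; its determinant is
then a continuous function with values `±1` on a connected set, hence stays `1`.
For the asymptotics, the frame `Y τ = A τ e^{τ K₀}` solves `Y' = A (K₀ - K) e^{τ K₀}`, and both
outer factors are orthogonal, hence bounded, so `‖Y'‖ = O(e^{-τ})`. Thus `Y` is Cauchy at infinity;
its limit `A₀` is orthogonal, `‖Y τ - A₀‖ = O(e^{-τ})`, and multiplying by `e^{-τ K₀}` gives the claim.
-/

open scoped Matrix

/-- Matrix exponential of a real 3×3 matrix. -/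
noncomputable def matExp (M : Matrix (Fin 3) (Fin 3) ℝ) : Matrix (Fin 3) (Fin 3) ℝ :=
  letI : NormedRing (Matrix (Fin 3) (Fin 3) ℝ) := Matrix.linftyOpNormedRing
  letI : NormedAlgebra ℝ (Matrix (Fin 3) (Fin 3) ℝ) := Matrix.linftyOpNormedAlgebra
  NormedSpace.exp M

open Set Filter Topology

section DecayAtInfinity

variable {E : Type*} [NormedAddCommGroup E] {f : ℝ → E} {τ₀ : ℝ}

theorem norm_sub_le_of_norm_deriv_le_exp_neg [NormedSpace ℝ E] {f' : ℝ → E} {c : ℝ}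
    (hf : ∀ x ∈ Ici τ₀, HasDerivAt f (f' x) x) (hf' : ∀ x ∈ Ici τ₀, ‖f' x‖ ≤ c * Real.exp (-x)) :
    ∀ t ∈ Ici τ₀, ∀ s ∈ Ici t, ‖f s - f t‖ ≤ c * Real.exp (-t) := by
  intro t ht s hs
  have hIci : Ici t ⊆ Ici τ₀ := Ici_subset_Ici.2 ht
  have hB : ∀ x, HasDerivAt (fun y => c * Real.exp (-t) - c * Real.exp (-y))
      (c * Real.exp (-x)) x := fun x => by
    simpa using ((Real.hasDerivAt_exp (-x)).comp x (hasDerivAt_neg x)).const_mul c |>.const_sub _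
  have hbound := image_norm_le_of_norm_deriv_right_le_deriv_boundary (f := fun y => f y - f t)
    (fun x hx => ((hf x (hIci hx.1)).continuousAt.sub continuousAt_const).continuousWithinAt)
    (fun x hx => ((hf x (hIci hx.1)).sub_const (f t)).hasDerivWithinAt)
    (by simp) hB (fun x hx => hf' x (hIci hx.1)) ⟨hs, le_rfl⟩
  have hcs : 0 ≤ c * Real.exp (-s) := (norm_nonneg _).trans (hf' s (hIci hs))
  linarith

theorem exists_tendsto_norm_sub_le [CompleteSpace E] {b : ℝ → ℝ} (hb : Tendsto b atTop (𝓝 0))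
    (hf : ∀ t ∈ Ici τ₀, ∀ s ∈ Ici t, ‖f s - f t‖ ≤ b t) :
    ∃ L, Tendsto f atTop (𝓝 L) ∧ ∀ t ∈ Ici τ₀, ‖f t - L‖ ≤ b t := by
  have hcauchy : CauchySeq f := Metric.cauchySeq_iff'.2 fun ε hε => by
    obtain ⟨N, hNε, hN⟩ := ((hb.eventually (gt_mem_nhds hε)).and (eventually_ge_atTop τ₀)).exists
    exact ⟨N, fun s hs => (dist_eq_norm _ _).trans_lt ((hf N hN s hs).trans_lt hNε)⟩
  obtain ⟨L, hL⟩ := cauchySeq_tendsto_of_complete hcauchy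
  refine ⟨L, hL, fun t ht => le_of_tendsto (tendsto_const_nhds.sub hL).norm ?_⟩
  filter_upwards [eventually_ge_atTop t] with s hs
  rw [norm_sub_rev]
  exact hf t ht s hs

end DecayAtInfinity

attribute [local instance] Matrix.linftyOpNormedRing Matrix.linftyOpNormedAlgebra

namespace Matrix

variable {m n : Type*}

theorem hasDerivAt_iff_apply [Fintype n] {A : ℝ → Matrix m n ℝ} {A' : Matrix m n ℝ} {t : ℝ} :
    HasDerivAt A A' t ↔ ∀ i j, HasDerivAt (fun s => A s i j) (A' i j) t :=
  hasDerivAt_pi.trans (forall_congr' fun _ => hasDerivAt_pi)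

section LinftyOpNorm

attribute [local instance] Matrix.linftyOpNormedAddCommGroup

variable [Fintype m] [Fintype n]

theorem abs_apply_le_linfty_opNorm (M : Matrix m n ℝ) (i : m) (j : n) : |M i j| ≤ ‖M‖ := by
  rw [← Real.norm_eq_abs, ← coe_nnnorm, ← coe_nnnorm, NNReal.coe_le_coe, linfty_opNNNorm_def]
  exact (Finset.single_le_sum (fun k _ => zero_le) (Finset.mem_univ j)).trans
    (Finset.le_sup (f := fun i => ∑ j, ‖M i j‖₊) (Finset.mem_univ i))

theorem linfty_opNorm_le_of_abs_apply_le {M : Matrix m n ℝ} {c : ℝ} (hc : 0 ≤ c)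
    (h : ∀ i j, |M i j| ≤ c) : ‖M‖ ≤ Fintype.card n * c := by
  lift c to NNReal using hc
  have hrow : ∀ i, ∑ j, ‖M i j‖₊ ≤ Fintype.card n • c := fun i =>
    Finset.sum_le_card_nsmul _ _ _ fun j _ => by
      rw [← NNReal.coe_le_coe, coe_nnnorm, Real.norm_eq_abs]
      exact h i j
  rw [← coe_nnnorm, linfty_opNNNorm_def, ← nsmul_eq_mul]
  exact_mod_cast Finset.sup_le fun i _ => hrow i

end LinftyOpNorm

variable [Fintype n]

theorem linfty_opNorm_le_card_of_mem_orthogonalGroup [DecidableEq n] {O : Matrix n n ℝ}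
    (hO : O ∈ orthogonalGroup n ℝ) : ‖O‖ ≤ Fintype.card n := by
  simpa using linfty_opNorm_le_of_abs_apply_le zero_le_one (entry_norm_bound_of_unitary hO)

theorem transpose_exp_smul_of_transpose_eq_neg [DecidableEq n] {K : Matrix n n ℝ} (hK : Kᵀ = -K)
    (t : ℝ) : (NormedSpace.exp (t • K))ᵀ = NormedSpace.exp ((-t) • K) := by
  rw [← exp_transpose, transpose_smul, hK, smul_neg, neg_smul]

theorem exp_smul_mem_orthogonalGroup [DecidableEq n] {K : Matrix n n ℝ} (hK : Kᵀ = -K) (t : ℝ) :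
    NormedSpace.exp (t • K) ∈ orthogonalGroup n ℝ := by
  rw [mem_orthogonalGroup_iff', transpose_exp_smul_of_transpose_eq_neg hK,
    ← exp_add_of_commute _ _ (((Commute.refl K).smul_left _).smul_right _), ← add_smul,
    neg_add_cancel, zero_smul, NormedSpace.exp_zero]

theorem sub_mul_exp_neg_smul_eq [DecidableEq n] {K : Matrix n n ℝ} (hK : Kᵀ = -K)
    (B C : Matrix n n ℝ) (t : ℝ) :
    B - C * NormedSpace.exp ((-t) • K) =
      (B * NormedSpace.exp (t • K) - C) * NormedSpace.exp ((-t) • K) := by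
  rw [sub_mul, mul_assoc, ← transpose_exp_smul_of_transpose_eq_neg hK,
    (mem_orthogonalGroup_iff n ℝ).1 (exp_smul_mem_orthogonalGroup hK t), mul_one]

end Matrix

section FrameEquation

variable {n : Type*} [Fintype n] [DecidableEq n]

theorem IsPreconnected.det_eq_one_of_mem_orthogonalGroup {X : Type*} [TopologicalSpace X]
    {S : Set X} (hS : IsPreconnected S) {A : X → Matrix n n ℝ} (hA : ContinuousOn A S)
    (horth : ∀ x ∈ S, A x ∈ Matrix.orthogonalGroup n ℝ) {x₀ : X} (hx₀ : x₀ ∈ S)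
    (h₀ : (A x₀).det = 1) : ∀ x ∈ S, (A x).det = 1 := by
  have hsq : EqOn ((fun x => (A x).det) ^ 2) 1 S := fun x hx => by
    simpa [sq] using congrArg Matrix.det ((Matrix.mem_orthogonalGroup_iff' n ℝ).1 (horth x hx))
  rcases hS.eq_one_or_eq_neg_one_of_sq_eq (continuous_id.matrix_det.comp_continuousOn hA) hsq
    with h | h
  · exact h
  · have := h hx₀
    norm_num [h₀] at this

variable {τ₀ : ℝ} {A K : ℝ → Matrix n n ℝ}

theorem mul_transpose_eq_of_hasDerivAt_neg_mul (hK : ∀ τ ∈ Ici τ₀, (K τ)ᵀ = -K τ)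
    (hA : ∀ τ ∈ Ici τ₀, HasDerivAt A (-(A τ * K τ)) τ) :
    ∀ τ ∈ Ici τ₀, A τ * (A τ)ᵀ = A τ₀ * (A τ₀)ᵀ := by
  have hderiv : ∀ τ ∈ Ici τ₀, HasDerivAt (fun s => A s * (A s)ᵀ) 0 τ := by
    intro τ hτ
    have hAT : HasDerivAt (fun s => (A s)ᵀ) (-(A τ * K τ))ᵀ τ :=
      Matrix.hasDerivAt_iff_apply.2 fun i j => Matrix.hasDerivAt_iff_apply.1 (hA τ hτ) j i
    refine ((hA τ hτ).mul hAT).congr_deriv ?_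
    rw [Matrix.transpose_neg, Matrix.transpose_mul, hK τ hτ]
    noncomm_ring
  intro τ hτ
  exact constant_of_has_deriv_right_zero
    (fun x hx => (hderiv x (Icc_subset_Ici_self hx)).continuousAt.continuousWithinAt)
    (fun x hx => (hderiv x hx.1).hasDerivWithinAt) τ ⟨hτ, le_rfl⟩

theorem mem_orthogonalGroup_of_hasDerivAt_neg_mul (hK : ∀ τ ∈ Ici τ₀, (K τ)ᵀ = -K τ)
    (hA : ∀ τ ∈ Ici τ₀, HasDerivAt A (-(A τ * K τ)) τ)
    (h₀ : A τ₀ ∈ Matrix.orthogonalGroup n ℝ) : ∀ τ ∈ Ici τ₀, A τ ∈ Matrix.orthogonalGroup n ℝ := by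
  intro τ hτ
  rw [Matrix.mem_orthogonalGroup_iff] at h₀ ⊢
  rw [mul_transpose_eq_of_hasDerivAt_neg_mul hK hA τ hτ, h₀]

theorem exists_mem_orthogonalGroup_norm_sub_mul_exp_le {K₀ : Matrix n n ℝ} (hK₀ : K₀ᵀ = -K₀)
    {c : ℝ} (hA : ∀ τ ∈ Ici τ₀, HasDerivAt A (-(A τ * K τ)) τ)
    (horth : ∀ τ ∈ Ici τ₀, A τ ∈ Matrix.orthogonalGroup n ℝ)
    (hK : ∀ τ ∈ Ici τ₀, ‖K τ - K₀‖ ≤ c * Real.exp (-τ)) :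
    ∃ A₀ ∈ Matrix.orthogonalGroup n ℝ, ∀ τ ∈ Ici τ₀,
      ‖A τ - A₀ * NormedSpace.exp ((-τ) • K₀)‖ ≤ Fintype.card n ^ 3 * c * Real.exp (-τ) := by
  set N : ℝ := (Fintype.card n : ℝ)
  have hexp_le : ∀ t : ℝ, ‖NormedSpace.exp (t • K₀)‖ ≤ N := fun t =>
    Matrix.linfty_opNorm_le_card_of_mem_orthogonalGroup (Matrix.exp_smul_mem_orthogonalGroup hK₀ t)
  have hY : ∀ τ ∈ Ici τ₀, HasDerivAt (fun s => A s * NormedSpace.exp (s • K₀))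
      (A τ * (K₀ - K τ) * NormedSpace.exp (τ • K₀)) τ := fun τ hτ =>
    ((hA τ hτ).mul (hasDerivAt_exp_smul_const' K₀ τ)).congr_deriv (by
      -- `rfl` bridges the default matrix `Sub` and the one carried by `linftyOpNormedRing`
      simp only [mul_sub, sub_mul, neg_mul, neg_add_eq_sub, mul_assoc]; rfl)
  have hY' : ∀ τ ∈ Ici τ₀, ‖A τ * (K₀ - K τ) * NormedSpace.exp (τ • K₀)‖ ≤
      N ^ 2 * c * Real.exp (-τ) := by
    intro τ hτ
    have hc : 0 ≤ c * Real.exp (-τ) := (norm_nonneg _).trans (hK τ hτ)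
    calc _ ≤ ‖A τ‖ * ‖K₀ - K τ‖ * ‖NormedSpace.exp (τ • K₀)‖ :=
          (norm_mul_le _ _).trans (by gcongr; exact norm_mul_le _ _)
      _ ≤ N * (c * Real.exp (-τ)) * N := by
          gcongr
          · exact Matrix.linfty_opNorm_le_card_of_mem_orthogonalGroup (horth τ hτ)
          · rw [norm_sub_rev]; exact hK τ hτ
          · exact hexp_le τ
      _ = N ^ 2 * c * Real.exp (-τ) := by ring
  have hdecay : Tendsto (fun t => N ^ 2 * c * Real.exp (-t)) atTop (𝓝 0) := by
    simpa using Real.tendsto_exp_neg_atTop_nhds_zero.const_mul (N ^ 2 * c)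
  obtain ⟨A₀, hlim, hbound⟩ :=
    exists_tendsto_norm_sub_le hdecay (norm_sub_le_of_norm_deriv_le_exp_neg hY hY')
  -- `ContinuousStar` is only available for the product topology, not the one of the local norm
  have hclosed := @isClosed_unitary (Matrix n n ℝ) _ _ instTopologicalSpaceMatrix _ _ _
  refine ⟨A₀, hclosed.mem_of_tendsto hlim ?_, fun τ hτ => ?_⟩
  · filter_upwards [eventually_ge_atTop τ₀] with τ hτ
    exact mul_mem (horth τ hτ) (Matrix.exp_smul_mem_orthogonalGroup hK₀ τ)
  · have hY_le := hbound τ hτ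
    calc _ ≤ ‖A τ * NormedSpace.exp (τ • K₀) - A₀‖ * ‖NormedSpace.exp ((-τ) • K₀)‖ :=
          Matrix.sub_mul_exp_neg_smul_eq hK₀ (A τ) A₀ τ ▸ norm_mul_le _ _
      _ ≤ N ^ 2 * c * Real.exp (-τ) * N := by
          gcongr
          · exact (norm_nonneg _).trans hY_le
          · exact hexp_le _
      _ = N ^ 3 * c * Real.exp (-τ) := by ring

end FrameEquation

theorem stmt_10_general (τ₀ C : ℝ) (hC : 0 ≤ C)
    (K₀ : Matrix (Fin 3) (Fin 3) ℝ) (hK₀ : K₀ᵀ = -K₀)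
    (K : ℝ → Matrix (Fin 3) (Fin 3) ℝ)
    (hKanti : ∀ τ ∈ Set.Ici τ₀, (K τ)ᵀ = -(K τ))
    (hKconv : ∀ τ ∈ Set.Ici τ₀, ∀ i j, |(K τ - K₀) i j| ≤ C * Real.exp (-τ))
    (A : ℝ → Matrix (Fin 3) (Fin 3) ℝ)
    (hA : ∀ τ ∈ Set.Ici τ₀, ∀ i j,
      HasDerivAt (fun s => A s i j) ((-(A τ * K τ)) i j) τ)
    (hA₀orth : (A τ₀)ᵀ * A τ₀ = 1) (hA₀det : (A τ₀).det = 1) :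
    (∀ τ ∈ Set.Ici τ₀, (A τ)ᵀ * A τ = 1 ∧ (A τ).det = 1) ∧
    ∃ A₀ : Matrix (Fin 3) (Fin 3) ℝ, A₀ᵀ * A₀ = 1 ∧
      ∃ C' : ℝ, ∀ τ ∈ Set.Ici τ₀, ∀ i j,
        |(A τ - A₀ * matExp ((-τ) • K₀)) i j| ≤ C' * Real.exp (-τ) := by
  have hA' : ∀ τ ∈ Ici τ₀, HasDerivAt A (-(A τ * K τ)) τ := fun τ hτ =>
    Matrix.hasDerivAt_iff_apply.2 (hA τ hτ)
  have horth := mem_orthogonalGroup_of_hasDerivAt_neg_mul hKanti hA'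
    ((Matrix.mem_orthogonalGroup_iff' _ ℝ).2 hA₀orth)
  have hdet := isPreconnected_Ici.det_eq_one_of_mem_orthogonalGroup
    (fun τ hτ => (hA' τ hτ).continuousAt.continuousWithinAt) horth self_mem_Ici hA₀det
  have hK : ∀ τ ∈ Ici τ₀, ‖K τ - K₀‖ ≤ 3 * C * Real.exp (-τ) := fun τ hτ => by
    simpa [mul_assoc] using Matrix.linfty_opNorm_le_of_abs_apply_le (by positivity) (hKconv τ hτ)
  obtain ⟨A₀, hA₀, hbound⟩ := exists_mem_orthogonalGroup_norm_sub_mul_exp_le hK₀ hA' horth hK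
  refine ⟨fun τ hτ => ⟨(Matrix.mem_orthogonalGroup_iff' _ ℝ).1 (horth τ hτ), hdet τ hτ⟩, A₀,
    (Matrix.mem_orthogonalGroup_iff' _ ℝ).1 hA₀, 3 ^ 3 * (3 * C), fun τ hτ i j => ?_⟩
  calc _ ≤ ‖A τ - A₀ * matExp ((-τ) • K₀)‖ := Matrix.abs_apply_le_linfty_opNorm _ i j
    _ ≤ Fintype.card (Fin 3) ^ 3 * (3 * C) * Real.exp (-τ) := hbound τ hτ
    _ = 3 ^ 3 * (3 * C) * Real.exp (-τ) := by rw [Fintype.card_fin]; norm_num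

/-- Asymptotic ODE lemma for the near-horizon frame: if `A' = -A·K(τ)` with `K`
antisymmetric and converging exponentially (entrywise) to a constant antisymmetric `K₀`,
and `A(τ₀) ∈ SO(3)`, then `A(τ) ∈ SO(3)` for all `τ ≥ τ₀` and there is a constant
orthogonal matrix `A₀` with `A(τ) = A₀ e^{-τK₀} + O(e^{-τ})` entrywise. -/
theorem stmt_10 (τ₀ C : ℝ) (hC : 0 ≤ C)
    (K₀ : Matrix (Fin 3) (Fin 3) ℝ) (hK₀ : K₀ᵀ = -K₀)
    (K : ℝ → Matrix (Fin 3) (Fin 3) ℝ)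
    (hKcont : ∀ i j, ContinuousOn (fun τ => K τ i j) (Set.Ici τ₀))
    (hKanti : ∀ τ ∈ Set.Ici τ₀, (K τ)ᵀ = -(K τ))
    (hKconv : ∀ τ ∈ Set.Ici τ₀, ∀ i j, |(K τ - K₀) i j| ≤ C * Real.exp (-τ))
    (A : ℝ → Matrix (Fin 3) (Fin 3) ℝ)
    (hA : ∀ τ ∈ Set.Ici τ₀, ∀ i j,
      HasDerivAt (fun s => A s i j) ((-(A τ * K τ)) i j) τ)
    (hA₀orth : (A τ₀)ᵀ * A τ₀ = 1) (hA₀det : (A τ₀).det = 1) :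
    (∀ τ ∈ Set.Ici τ₀, (A τ)ᵀ * A τ = 1 ∧ (A τ).det = 1) ∧
    ∃ A₀ : Matrix (Fin 3) (Fin 3) ℝ, A₀ᵀ * A₀ = 1 ∧
      ∃ C' : ℝ, ∀ τ ∈ Set.Ici τ₀, ∀ i j,
        |(A τ - A₀ * matExp ((-τ) • K₀)) i j| ≤ C' * Real.exp (-τ) :=
  stmt_10_general τ₀ C hC K₀ hK₀ K hKanti hKconv A hA hA₀orth hA₀det
end

section
/- Suppose a, b, c are C¹ functions near ρ = 0 satisfying 2bca' = b² − a² + c² and 2acb' = a² − b² + c², with expansions a = αρ + O(ρ²), b = βρ + O(ρ²), c = γρ + O(ρ²) for positive constants α, β, γ (a 'nut'). Then β = α and γ = 2α². -/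
/-!
Divide the two equations by `ρ²`: since `a/ρ → α`, `b/ρ → β`, `c/ρ → γ`, the derivatives
`a'` and `b'` have limits at `0⁺`, and by l'Hôpital these limits are again `α` and `β`.
This gives `2αβγ = β² - α² + γ²` and `2αβγ = α² - β² + γ²`; their difference forces
`β² = α²` and their sum `γ = 2αβ`.
-/

open Asymptotics Filter Set Topology

lemma tendsto_div_of_isBigO_sub_mul {f : ℝ → ℝ} {k : ℝ}
    (h : (fun ρ => f ρ - k * ρ) =O[𝓝[>] 0] fun ρ => ρ ^ 2) :
    Tendsto (fun ρ => f ρ / ρ) (𝓝[>] 0) (𝓝 k) := by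
  have hdiv : (fun ρ : ℝ => f ρ / ρ - k) =O[𝓝[>] 0] fun ρ => ρ := by
    refine (h.mul (isBigO_refl (fun ρ : ℝ => ρ⁻¹) _)).congr' ?_ ?_ <;>
      filter_upwards [self_mem_nhdsWithin] with ρ (hρ : 0 < ρ)
    · field_simp
    · field_simp
  have hzero : Tendsto (fun ρ : ℝ => f ρ / ρ - k) (𝓝[>] 0) (𝓝 0) :=
    hdiv.trans_tendsto (tendsto_nhdsWithin_of_tendsto_nhds tendsto_id)
  simpa using hzero.add_const k

lemma tendsto_zero_of_tendsto_div {f : ℝ → ℝ} {k : ℝ}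
    (h : Tendsto (fun ρ => f ρ / ρ) (𝓝[>] 0) (𝓝 k)) :
    Tendsto f (𝓝[>] 0) (𝓝 0) := by
  have hmul := h.mul (tendsto_nhdsWithin_of_tendsto_nhds (tendsto_id (x := 𝓝 (0 : ℝ))))
  rw [mul_zero] at hmul
  refine hmul.congr' ?_
  filter_upwards [self_mem_nhdsWithin] with ρ (hρ : 0 < ρ)
  rw [id, div_mul_cancel₀ _ hρ.ne']

lemma tendsto_div_of_tendsto_deriv {ε L : ℝ} {f f' : ℝ → ℝ} (hε : 0 < ε)
    (hf' : ∀ ρ ∈ Ioo 0 ε, HasDerivAt f (f' ρ) ρ) (hf : Tendsto f (𝓝[>] 0) (𝓝 0))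
    (hL : Tendsto f' (𝓝[>] 0) (𝓝 L)) :
    Tendsto (fun ρ => f ρ / ρ) (𝓝[>] 0) (𝓝 L) :=
  HasDerivAt.lhopital_zero_right_on_Ioo hε hf' (fun ρ _ => hasDerivAt_id ρ)
    (fun _ _ => one_ne_zero) hf (tendsto_nhdsWithin_of_tendsto_nhds tendsto_id)
    (by simpa using hL)

lemma tendsto_deriv_of_ode {kf kg kc : ℝ} {f g c f' : ℝ → ℝ} (hkg : kg ≠ 0) (hkc : kc ≠ 0)
    (hode : ∀ᶠ ρ in 𝓝[>] 0, 2 * g ρ * c ρ * f' ρ = g ρ ^ 2 - f ρ ^ 2 + c ρ ^ 2)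
    (hf : Tendsto (fun ρ => f ρ / ρ) (𝓝[>] 0) (𝓝 kf))
    (hg : Tendsto (fun ρ => g ρ / ρ) (𝓝[>] 0) (𝓝 kg))
    (hc : Tendsto (fun ρ => c ρ / ρ) (𝓝[>] 0) (𝓝 kc)) :
    Tendsto f' (𝓝[>] 0) (𝓝 ((kg ^ 2 - kf ^ 2 + kc ^ 2) / (2 * kg * kc))) := by
  have hnum := ((hg.pow 2).sub (hf.pow 2)).add (hc.pow 2)
  have hden := (hg.const_mul 2).mul hc
  refine (hnum.div hden (by positivity)).congr' ?_
  filter_upwards [hode, hg.eventually_ne hkg, hc.eventually_ne hkc, self_mem_nhdsWithin]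
    with ρ hρ hgρ hcρ (hρpos : 0 < ρ)
  have hg0 : g ρ ≠ 0 := (div_ne_zero_iff.mp hgρ).1
  have hc0 : c ρ ≠ 0 := (div_ne_zero_iff.mp hcρ).1
  rw [Pi.div_apply]
  field_simp
  linear_combination -hρ

lemma slope_mul_eq_of_ode {ε kf kg kc : ℝ} {f g c f' : ℝ → ℝ} (hε : 0 < ε)
    (hkg : kg ≠ 0) (hkc : kc ≠ 0) (hf' : ∀ ρ ∈ Ioo 0 ε, HasDerivAt f (f' ρ) ρ)
    (hode : ∀ ρ ∈ Ioo 0 ε, 2 * g ρ * c ρ * f' ρ = g ρ ^ 2 - f ρ ^ 2 + c ρ ^ 2)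
    (hf : Tendsto (fun ρ => f ρ / ρ) (𝓝[>] 0) (𝓝 kf))
    (hg : Tendsto (fun ρ => g ρ / ρ) (𝓝[>] 0) (𝓝 kg))
    (hc : Tendsto (fun ρ => c ρ / ρ) (𝓝[>] 0) (𝓝 kc)) :
    2 * kg * kc * kf = kg ^ 2 - kf ^ 2 + kc ^ 2 := by
  have hode' : ∀ᶠ ρ in 𝓝[>] 0, 2 * g ρ * c ρ * f' ρ = g ρ ^ 2 - f ρ ^ 2 + c ρ ^ 2 :=
    eventually_of_mem (Ioo_mem_nhdsGT hε) hode
  have hlim := tendsto_div_of_tendsto_deriv hε hf' (tendsto_zero_of_tendsto_div hf)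
    (tendsto_deriv_of_ode hkg hkc hode' hf hg hc)
  have hkf := tendsto_nhds_unique hf hlim
  rw [eq_div_iff (by positivity)] at hkf
  linarith

lemma eq_and_eq_two_mul_sq_of_nut {α β γ : ℝ} (hα : 0 < α) (hβ : 0 < β) (hγ : γ ≠ 0)
    (ha : 2 * β * γ * α = β ^ 2 - α ^ 2 + γ ^ 2)
    (hb : 2 * α * γ * β = α ^ 2 - β ^ 2 + γ ^ 2) :
    β = α ∧ γ = 2 * α ^ 2 := by
  have hβα : β = α := by
    have hsq : β ^ 2 = α ^ 2 := by linear_combination (hb - ha) / 2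
    exact (pow_left_inj₀ hβ.le hα.le two_ne_zero).mp hsq
  subst hβα
  refine ⟨rfl, mul_left_cancel₀ hγ ?_⟩
  linear_combination -(ha + hb) / 2

theorem stmt_12_general (ε α β γ : ℝ) (hε : 0 < ε) (hα : 0 < α) (hβ : 0 < β) (hγ : 0 < γ)
    (a b c a' b' : ℝ → ℝ)
    (hda : ∀ ρ ∈ Set.Ioo (0 : ℝ) ε, HasDerivAt a (a' ρ) ρ)
    (hdb : ∀ ρ ∈ Set.Ioo (0 : ℝ) ε, HasDerivAt b (b' ρ) ρ)
    (hode1 : ∀ ρ ∈ Set.Ioo (0 : ℝ) ε,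
      2 * b ρ * c ρ * a' ρ = (b ρ) ^ 2 - (a ρ) ^ 2 + (c ρ) ^ 2)
    (hode2 : ∀ ρ ∈ Set.Ioo (0 : ℝ) ε,
      2 * a ρ * c ρ * b' ρ = (a ρ) ^ 2 - (b ρ) ^ 2 + (c ρ) ^ 2)
    (hea : (fun ρ => a ρ - α * ρ) =O[nhdsWithin 0 (Set.Ioi 0)] fun ρ => ρ ^ 2)
    (heb : (fun ρ => b ρ - β * ρ) =O[nhdsWithin 0 (Set.Ioi 0)] fun ρ => ρ ^ 2)
    (hec : (fun ρ => c ρ - γ * ρ) =O[nhdsWithin 0 (Set.Ioi 0)] fun ρ => ρ ^ 2) :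
    β = α ∧ γ = 2 * α ^ 2 := by
  have ha := tendsto_div_of_isBigO_sub_mul hea
  have hb := tendsto_div_of_isBigO_sub_mul heb
  have hc := tendsto_div_of_isBigO_sub_mul hec
  exact eq_and_eq_two_mul_sq_of_nut hα hβ hγ.ne'
    (slope_mul_eq_of_ode hε hβ.ne' hγ.ne' hda hode1 ha hb hc)
    (slope_mul_eq_of_ode hε hα.ne' hγ.ne' hdb hode2 hb ha hc)

/-- Lemma 3.4 (nut expansion): if `a, b, c` are `C¹` solutions of the Kähler ODE system
near `ρ = 0` with `a = αρ + O(ρ²)`, `b = βρ + O(ρ²)`, `c = γρ + O(ρ²)` for positive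
constants `α, β, γ`, then `β = α` and `γ = 2α²`. -/
theorem stmt_12 (ε α β γ : ℝ) (hε : 0 < ε) (hα : 0 < α) (hβ : 0 < β) (hγ : 0 < γ)
    (a b c a' b' : ℝ → ℝ)
    (hda : ∀ ρ ∈ Set.Ioo (0 : ℝ) ε, HasDerivAt a (a' ρ) ρ)
    (hdb : ∀ ρ ∈ Set.Ioo (0 : ℝ) ε, HasDerivAt b (b' ρ) ρ)
    (hda' : ContinuousOn a' (Set.Ioo 0 ε))
    (hdb' : ContinuousOn b' (Set.Ioo 0 ε))
    (hode1 : ∀ ρ ∈ Set.Ioo (0 : ℝ) ε,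
      2 * b ρ * c ρ * a' ρ = (b ρ) ^ 2 - (a ρ) ^ 2 + (c ρ) ^ 2)
    (hode2 : ∀ ρ ∈ Set.Ioo (0 : ℝ) ε,
      2 * a ρ * c ρ * b' ρ = (a ρ) ^ 2 - (b ρ) ^ 2 + (c ρ) ^ 2)
    (hea : (fun ρ => a ρ - α * ρ) =O[nhdsWithin 0 (Set.Ioi 0)] fun ρ => ρ ^ 2)
    (heb : (fun ρ => b ρ - β * ρ) =O[nhdsWithin 0 (Set.Ioi 0)] fun ρ => ρ ^ 2)
    (hec : (fun ρ => c ρ - γ * ρ) =O[nhdsWithin 0 (Set.Ioi 0)] fun ρ => ρ ^ 2) :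
    β = α ∧ γ = 2 * α ^ 2 :=
  stmt_12_general ε α β γ hε hα hβ hγ a b c a' b' hda hdb hode1 hode2 hea heb hec
end

section
/- Let V(r) = (r² − r₀²)(a₀ + a₁r² + r⁴/ℓ²)/r⁴ with r₀, ℓ > 0 and a₁ = 1 + r₀²/ℓ², a₀ = −r₀²(1 − p + 2r₀²/ℓ²) for an integer p ≥ 1. Then V(r) > 0 for all r > r₀. Explicitly, V(r) = (r² − r₀²)[(r² + 2r₀²)(r² − r₀²)/ℓ² + r² + r₀²(p − 1)]/r⁴, and the bracket is positive for r > r₀. -/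
/-- Positivity of the extremal Kähler potential with a bolt (Appendix B.3): with
`a₁ = 1 + r₀²/ℓ²` and `a₀ = −r₀²(1 − p + 2r₀²/ℓ²)` for an integer `p ≥ 1`, the function
`V(r) = (r² − r₀²)(a₀ + a₁r² + r⁴/ℓ²)/r⁴` is positive for `r > r₀`, has the stated
explicit factorized form, and the bracket is positive for `r > r₀`. -/
theorem stmt_15 (r₀ ℓ : ℝ) (hr₀ : 0 < r₀) (hℓ : 0 < ℓ) (p : ℕ) (hp : 1 ≤ p)
    (a₀ a₁ : ℝ) (ha₁ : a₁ = 1 + r₀ ^ 2 / ℓ ^ 2)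
    (ha₀ : a₀ = -(r₀ ^ 2) * (1 - (p : ℝ) + 2 * r₀ ^ 2 / ℓ ^ 2))
    (V : ℝ → ℝ)
    (hV : ∀ r, V r = (r ^ 2 - r₀ ^ 2) * (a₀ + a₁ * r ^ 2 + r ^ 4 / ℓ ^ 2) / r ^ 4) :
    ∀ r, r₀ < r →
      0 < V r ∧
      V r = (r ^ 2 - r₀ ^ 2) *
        ((r ^ 2 + 2 * r₀ ^ 2) * (r ^ 2 - r₀ ^ 2) / ℓ ^ 2 + r ^ 2 + r₀ ^ 2 * ((p : ℝ) - 1))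
          / r ^ 4 ∧
      0 < (r ^ 2 + 2 * r₀ ^ 2) * (r ^ 2 - r₀ ^ 2) / ℓ ^ 2 + r ^ 2 + r₀ ^ 2 * ((p : ℝ) - 1) := by
  intro r hr
  have hℓ2 : (0:ℝ) < ℓ ^ 2 := by positivity
  have hrpos : 0 < r := hr₀.trans hr
  have hr2 : r₀ ^ 2 < r ^ 2 := by nlinarith
  have hp1 : (1:ℝ) ≤ (p:ℝ) := by exact_mod_cast hp
  have hform : V r = (r ^ 2 - r₀ ^ 2) *
      ((r ^ 2 + 2 * r₀ ^ 2) * (r ^ 2 - r₀ ^ 2) / ℓ ^ 2 + r ^ 2 + r₀ ^ 2 * ((p : ℝ) - 1))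
        / r ^ 4 := by
    rw [hV r, ha₀, ha₁]
    field_simp
    ring
  have hbr : 0 < (r ^ 2 + 2 * r₀ ^ 2) * (r ^ 2 - r₀ ^ 2) / ℓ ^ 2 + r ^ 2 + r₀ ^ 2 * ((p : ℝ) - 1) := by
    have h1 : 0 ≤ (r ^ 2 + 2 * r₀ ^ 2) * (r ^ 2 - r₀ ^ 2) / ℓ ^ 2 := by
      apply div_nonneg _ hℓ2.le
      nlinarith
    nlinarith
  refine ⟨?_, hform, hbr⟩
  rw [hform]
  have : 0 < r ^ 2 - r₀ ^ 2 := by linarith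
  positivity
end

section
/- Suppose a, b, c : (0, ε) → ℝ are positive C¹ solutions of 2bca' = b² − a² + c² and 2acb' = a² − b² + c² with a = b on (0, ε). Then c = (a²)' = 2aa' on (0, ε), and the metric coefficient satisfies a single constraint: setting r = 2a, one has c² = r²V/4 with V = 4(a')² where a' is computed with respect to ρ, i.e. the metric takes the form dr²/V + (r²/4)(σ₁² + σ₂²) + (r²V/4)σ₃². -/
lemma eq_two_mul_mul_of_ode_of_eq {a b c a' : ℝ} (hc : c ≠ 0)
    (hode : 2 * b * c * a' = b ^ 2 - a ^ 2 + c ^ 2) (hab : a = b) :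
    c = 2 * a * a' := by
  subst hab
  have hmul : c * (2 * a * a') = c * c := by linear_combination hode
  exact (mul_left_cancel₀ hc hmul).symm

lemma deriv_sq_of_hasDerivAt {f : ℝ → ℝ} {f' x : ℝ} (hf : HasDerivAt f f' x) :
    deriv (fun y => f y ^ 2) x = 2 * f x * f' := by
  rw [(hf.fun_pow 2).deriv]
  ring

theorem stmt_18_general (ε : ℝ) (a b c a' : ℝ → ℝ)
    (hcpos : ∀ ρ ∈ Set.Ioo (0 : ℝ) ε, 0 < c ρ)
    (hda : ∀ ρ ∈ Set.Ioo (0 : ℝ) ε, HasDerivAt a (a' ρ) ρ)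
    (hode1 : ∀ ρ ∈ Set.Ioo (0 : ℝ) ε,
      2 * b ρ * c ρ * a' ρ = (b ρ) ^ 2 - (a ρ) ^ 2 + (c ρ) ^ 2)
    (hab : ∀ ρ ∈ Set.Ioo (0 : ℝ) ε, a ρ = b ρ) :
    ∀ ρ ∈ Set.Ioo (0 : ℝ) ε,
      c ρ = 2 * a ρ * a' ρ ∧
      c ρ = deriv (fun x => (a x) ^ 2) ρ ∧
      (c ρ) ^ 2 = (2 * a ρ) ^ 2 * (4 * (a' ρ) ^ 2) / 4 := by
  intro ρ hρ
  have hc : c ρ = 2 * a ρ * a' ρ :=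
    eq_two_mul_mul_of_ode_of_eq (hcpos ρ hρ).ne' (hode1 ρ hρ) (hab ρ hρ)
  refine ⟨hc, by rw [deriv_sq_of_hasDerivAt (hda ρ hρ), hc], ?_⟩
  rw [hc]
  ring

/-- Specialization of the SU(2)-invariant Kähler ODE system to the `U(1)×SU(2)` case
`a = b`: then `c = (a²)' = 2aa'`, and with `r = 2a` and `V = 4(a')²` one has
`c² = r²V/4`, i.e. the metric takes the standard form (2.21). -/
theorem stmt_18 (ε : ℝ) (hε : 0 < ε) (a b c a' b' : ℝ → ℝ)
    (hapos : ∀ ρ ∈ Set.Ioo (0 : ℝ) ε, 0 < a ρ)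
    (hbpos : ∀ ρ ∈ Set.Ioo (0 : ℝ) ε, 0 < b ρ)
    (hcpos : ∀ ρ ∈ Set.Ioo (0 : ℝ) ε, 0 < c ρ)
    (hda : ∀ ρ ∈ Set.Ioo (0 : ℝ) ε, HasDerivAt a (a' ρ) ρ)
    (hdb : ∀ ρ ∈ Set.Ioo (0 : ℝ) ε, HasDerivAt b (b' ρ) ρ)
    (hda' : ContinuousOn a' (Set.Ioo 0 ε)) (hdb' : ContinuousOn b' (Set.Ioo 0 ε))
    (hode1 : ∀ ρ ∈ Set.Ioo (0 : ℝ) ε,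
      2 * b ρ * c ρ * a' ρ = (b ρ) ^ 2 - (a ρ) ^ 2 + (c ρ) ^ 2)
    (hode2 : ∀ ρ ∈ Set.Ioo (0 : ℝ) ε,
      2 * a ρ * c ρ * b' ρ = (a ρ) ^ 2 - (b ρ) ^ 2 + (c ρ) ^ 2)
    (hab : ∀ ρ ∈ Set.Ioo (0 : ℝ) ε, a ρ = b ρ) :
    ∀ ρ ∈ Set.Ioo (0 : ℝ) ε,
      c ρ = 2 * a ρ * a' ρ ∧
      c ρ = deriv (fun x => (a x) ^ 2) ρ ∧
      (c ρ) ^ 2 = (2 * a ρ) ^ 2 * (4 * (a' ρ) ^ 2) / 4 :=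
  stmt_18_general ε a b c a' hcpos hda hode1 hab
end
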